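/- arXiv:math/0305056 — 5 statements merged into one kernel-verified Lean document; each statement's English description precedes it below -/
import Mathlib

section
/- For any real numbers J₁, J₂ and any σ₁, σ₂ ∈ {+1, -1}, tanh(J₁σ₁ + J₂σ₂) = aσ₁ + bσ₂, where a = sinh(2J₁)/(cosh(2J₁)+cosh(2J₂)) and b = sinh(2J₂)/(cosh(2J₁)+cosh(2J₂)). -/
/-!
Sum-to-product turns the right-hand side into
`2 sinh(x + y) cosh(x - y) / (2 cosh(x + y) cosh(x - y)) = tanh(x + y)` with `x = J₁σ₁`, `y = J₂σ₂`;
since `σᵢ = ±1`, `sinh(2Jᵢσᵢ) = σᵢ sinh(2Jᵢ)` and `cosh(2Jᵢσᵢ) = cosh(2Jᵢ)`.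
-/

namespace Real

lemma sinh_add_add_sinh_sub (x y : ℝ) :
    sinh (x + y) + sinh (x - y) = 2 * sinh x * cosh y := by
  rw [sinh_add, sinh_sub]
  ring

lemma cosh_add_add_cosh_sub (x y : ℝ) :
    cosh (x + y) + cosh (x - y) = 2 * cosh x * cosh y := by
  rw [cosh_add, cosh_sub]
  ring

lemma tanh_add_eq_div (x y : ℝ) :
    tanh (x + y) = (sinh (2 * x) + sinh (2 * y)) / (cosh (2 * x) + cosh (2 * y)) := by
  have hx : 2 * x = (x + y) + (x - y) := by ring
  have hy : 2 * y = (x + y) - (x - y) := by ring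
  rw [hx, hy, sinh_add_add_sinh_sub, cosh_add_add_cosh_sub,
    mul_div_mul_right _ _ (cosh_pos _).ne', mul_div_mul_left _ _ two_ne_zero,
    tanh_eq_sinh_div_cosh]

lemma sinh_mul_of_eq_one_or_eq_neg_one {σ : ℝ} (hσ : σ = 1 ∨ σ = -1) (x : ℝ) :
    sinh (x * σ) = sinh x * σ := by
  rcases hσ with rfl | rfl <;> simp

lemma cosh_mul_of_eq_one_or_eq_neg_one {σ : ℝ} (hσ : σ = 1 ∨ σ = -1) (x : ℝ) :
    cosh (x * σ) = cosh x := by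
  rcases hσ with rfl | rfl <;> simp

end Real

theorem stmt_1 (J₁ J₂ σ₁ σ₂ : ℝ)
    (hσ₁ : σ₁ = 1 ∨ σ₁ = -1) (hσ₂ : σ₂ = 1 ∨ σ₂ = -1) :
    Real.tanh (J₁ * σ₁ + J₂ * σ₂) =
      (Real.sinh (2 * J₁) / (Real.cosh (2 * J₁) + Real.cosh (2 * J₂))) * σ₁ +
      (Real.sinh (2 * J₂) / (Real.cosh (2 * J₁) + Real.cosh (2 * J₂))) * σ₂ := by
  rw [Real.tanh_add_eq_div, ← mul_assoc, ← mul_assoc,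
    Real.sinh_mul_of_eq_one_or_eq_neg_one hσ₁, Real.sinh_mul_of_eq_one_or_eq_neg_one hσ₂,
    Real.cosh_mul_of_eq_one_or_eq_neg_one hσ₁, Real.cosh_mul_of_eq_one_or_eq_neg_one hσ₂,
    add_div, mul_div_right_comm, mul_div_right_comm (Real.sinh (2 * J₂))]
end

section
/- Let n ≥ 3, J₁,...,J_n > 0, and let M be the n×n cyclic tridiagonal matrix with M(i,i-1) = sinh(2J_{i-1})/(cosh(2J_{i-1})+cosh(2J_i)), M(i,i+1) = sinh(2J_i)/(cosh(2J_{i-1})+cosh(2J_i)) (indices mod n), other entries zero. If x has strictly positive entries and Mx = λx with 0 < λ < 1, then for every i, (cosh(2J_i) - 1)/sinh(2J_i) ≤ x_i/x_{i+1} ≤ (cosh(2J_i) + 1)/sinh(2J_i). -/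
theorem stmt_9 (n : ℕ) [NeZero n] (hn : 3 ≤ n) (J : Fin n → ℝ) (hJ : ∀ i, 0 < J i)
    (M : Matrix (Fin n) (Fin n) ℝ)
    (hM : ∀ i j : Fin n,
      M i j = if j = i - 1 then
          Real.sinh (2 * J (i - 1)) / (Real.cosh (2 * J (i - 1)) + Real.cosh (2 * J i))
        else if j = i + 1 then
          Real.sinh (2 * J i) / (Real.cosh (2 * J (i - 1)) + Real.cosh (2 * J i))
        else 0)
    (x : Fin n → ℝ) (hx : ∀ i, 0 < x i)
    (lam : ℝ) (hlam : 0 < lam) (hlam1 : lam < 1)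
    (heig : M.mulVec x = lam • x) :
    ∀ i, (Real.cosh (2 * J i) - 1) / Real.sinh (2 * J i) ≤ x i / x (i + 1) ∧
         x i / x (i + 1) ≤ (Real.cosh (2 * J i) + 1) / Real.sinh (2 * J i) := by
  have hs : ∀ i, 0 < Real.sinh (2 * J i) := fun i => Real.sinh_pos_iff.2 (by linarith [hJ i])
  have hc : ∀ i, 1 < Real.cosh (2 * J i) :=
    fun i => Real.one_lt_cosh.2 (by have := hJ i; positivity)
  have hsq : ∀ i, Real.cosh (2 * J i) ^ 2 = Real.sinh (2 * J i) ^ 2 + 1 :=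
    fun i => Real.cosh_sq _
  have hslt : ∀ i, Real.sinh (2 * J i) < Real.cosh (2 * J i) + 1 := by
    intro i; nlinarith [hs i, hc i, hsq i]
  -- the distinctness of the two neighbor indices
  open Fin.CommRing in
  have hne : ∀ i : Fin n, i - 1 ≠ i + 1 := by
    intro i h
    have h2 : (2 : Fin n) = 0 := by
      calc (2:Fin n) = i + 1 - (i - 1) := by ring
      _ = 0 := by rw [← h]; ring
    have h3 : ((2:ℕ) : Fin n) = 0 := by exact_mod_cast h2
    have h4 : n ∣ 2 := (Fin.natCast_eq_zero).1 h3
    have := Nat.le_of_dvd two_pos h4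
    omega
  -- key inequality from the eigen-equation
  have key : ∀ i : Fin n,
      Real.sinh (2 * J (i - 1)) * x (i - 1) + Real.sinh (2 * J i) * x (i + 1)
        < (Real.cosh (2 * J (i - 1)) + Real.cosh (2 * J i)) * x i := by
    intro i
    have hrow := congrFun heig i
    have hD : 0 < Real.cosh (2 * J (i - 1)) + Real.cosh (2 * J i) := by
      linarith [hc (i-1), hc i]
    have hsum : (Real.sinh (2 * J (i - 1)) * x (i - 1) + Real.sinh (2 * J i) * x (i + 1))
        / (Real.cosh (2 * J (i - 1)) + Real.cosh (2 * J i)) = lam * x i := by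
      simp only [Pi.smul_apply, smul_eq_mul] at hrow
      rw [← hrow]
      simp only [Matrix.mulVec, dotProduct]
      simp only [hM]
      have e1 : ∀ j : Fin n,
          (if j = i - 1 then
              Real.sinh (2 * J (i - 1)) / (Real.cosh (2 * J (i - 1)) + Real.cosh (2 * J i))
            else if j = i + 1 then
              Real.sinh (2 * J i) / (Real.cosh (2 * J (i - 1)) + Real.cosh (2 * J i))
            else 0) * x j =
          (if j = i - 1 then
              Real.sinh (2 * J (i - 1)) / (Real.cosh (2 * J (i - 1)) + Real.cosh (2 * J i)) * x j
            else 0) +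
          (if j = i + 1 then
              Real.sinh (2 * J i) / (Real.cosh (2 * J (i - 1)) + Real.cosh (2 * J i)) * x j
            else 0) := by
        intro j
        rcases eq_or_ne j (i - 1) with h1 | h1
        · subst h1
          rw [if_pos rfl, if_pos rfl, if_neg (hne i)]
          ring
        · rcases eq_or_ne j (i + 1) with h2 | h2
          · subst h2
            rw [if_neg h1, if_pos rfl, if_neg h1, if_pos rfl]
            ring
          · rw [if_neg h1, if_neg h2, if_neg h1, if_neg h2]
            ring
      rw [Finset.sum_congr rfl fun j _ => e1 j, Finset.sum_add_distrib,
        Finset.sum_ite_eq' Finset.univ (i - 1), Finset.sum_ite_eq' Finset.univ (i + 1)]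
      simp only [Finset.mem_univ, if_true]
      field_simp
    have h1 : (Real.sinh (2 * J (i - 1)) * x (i - 1) + Real.sinh (2 * J i) * x (i + 1))
        = lam * x i * (Real.cosh (2 * J (i - 1)) + Real.cosh (2 * J i)) := by
      field_simp at hsum; linarith [hsum]
    have h2 := mul_lt_mul_of_pos_right hlam1 (mul_pos (hx i) hD)
    nlinarith [h2]
  -- L i : failure of lower bound at i ; it propagates backwards
  set L : Fin n → Prop := fun i =>
    (Real.cosh (2 * J i) + 1) * x i < Real.sinh (2 * J i) * x (i + 1) with hL
  set U : Fin n → Prop := fun i =>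
    (Real.cosh (2 * J i) + 1) * x (i + 1) < Real.sinh (2 * J i) * x i with hU
  have stepL : ∀ i, L i → L (i - 1) := by
    intro i hLi
    simp only [hL] at hLi ⊢
    rw [sub_add_cancel]
    have hk := key i
    have h5 : Real.sinh (2 * J (i-1)) * x (i - 1) < (Real.cosh (2 * J (i-1)) - 1) * x i := by
      linarith
    nlinarith [hs (i-1), hsq (i-1), hx (i-1), hx i, hc (i-1)]
  have stepU : ∀ i, U i → U (i + 1) := by
    intro i hUi
    simp only [hU] at hUi ⊢
    have hk := key (i + 1)
    rw [add_sub_cancel_right] at hk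
    have h5 : Real.sinh (2 * J (i+1)) * x (i + 1 + 1) < (Real.cosh (2 * J (i+1)) - 1) * x (i+1) := by
      linarith
    nlinarith [hs (i+1), hsq (i+1), hx (i+1+1), hx (i+1), hc (i+1)]
  have hNE : Nonempty (Fin n) := Fin.pos_iff_nonempty.1 (by omega)
  -- no i satisfies L
  open Fin.CommRing in
  have noL : ∀ i, ¬ L i := by
    intro i hLi
    have all : ∀ k : ℕ, L (i - (k : Fin n)) := by
      intro k
      induction k with
      | zero => simpa using hLi
      | succ m ih =>
        have : (i - (m : Fin n)) - 1 = i - ((m+1 : ℕ) : Fin n) := by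
          push_cast
          ring
        have h7 := stepL _ ih
        rwa [this] at h7
    have allL : ∀ j, L j := by
      intro j
      have := all ((i - j).val)
      rwa [Fin.cast_val_eq_self, sub_sub_cancel] at this
    have mono : ∀ j : Fin n, x j < x (j + 1) := by
      intro j
      have := allL j
      simp only [hL] at this
      nlinarith [hslt j, hx j, hx (j+1), hs j, hc j]
    obtain ⟨a, ha⟩ := Finite.exists_max x
    exact absurd (ha (a + 1)) (not_le.2 (mono a))
  open Fin.CommRing in
  have noU : ∀ i, ¬ U i := by
    intro i hUi
    have all : ∀ k : ℕ, U (i + (k : Fin n)) := by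
      intro k
      induction k with
      | zero => simpa using hUi
      | succ m ih =>
        have h6 : (i + (m : Fin n)) + 1 = i + ((m+1 : ℕ) : Fin n) := by
          push_cast
          ring
        have := stepU _ ih
        rwa [h6] at this
    have allU : ∀ j, U j := by
      intro j
      have := all ((j - i).val)
      rwa [Fin.cast_val_eq_self, add_sub_cancel] at this
    have mono : ∀ j : Fin n, x (j + 1) < x j := by
      intro j
      have := allU j
      simp only [hU] at this
      nlinarith [hslt j, hx j, hx (j+1), hs j, hc j]
    obtain ⟨a, ha⟩ := Finite.exists_max x
    exact absurd (ha (a - 1)) (not_le.2 (by have := mono (a - 1); rwa [sub_add_cancel] at this))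
  intro i
  have hLi := noL i
  have hUi := noU i
  simp only [hL, not_lt] at hLi
  simp only [hU, not_lt] at hUi
  constructor
  · rw [div_le_div_iff₀ (hs i) (hx (i+1))]
    nlinarith [hs i, hsq i, hx i, hx (i+1), hc i]
  · rw [div_le_div_iff₀ (hx (i+1)) (hs i)]
    nlinarith [hs i, hx i, hx (i+1)]
end

section
/- Let π be a probability measure on {-1,+1}ⁿ satisfying the FKG inequality (π(fg) ≥ π(f)π(g) for all increasing f, g). If f is strictly increasing with π(f) = 0, and g is increasing with π(g) = 0 and π(fg) = 0, then g = 0 π-almost surely (i.e., π(g²) = 0). -/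
/-! Perturbing the strictly increasing `f` by a small multiple of `g` keeps it increasing, since
only finitely many strict inequalities `f σ < f τ` have to survive. For small `c > 0` the FKG
inequality for `f - c g` and `g`, combined with `π(g) = 0` and `π(fg) = 0`, reads
`0 ≤ -c π(g²)`, so `π(g²) = 0`. -/

open Filter Topology

/-- Configurations of the Ising model on `n` sites: spins taking values in
`{-1, +1} ⊆ ℝ`, with the coordinatewise partial order. -/
abbrev Spins (n : ℕ) : Type := Fin n → ({-1, 1} : Finset ℝ)

section

variable {α : Type*} [PartialOrder α] [Finite α] {f : α → ℝ}

theorem StrictMono.eventually_monotone_sub_smul (hf : StrictMono f) (g : α → ℝ) :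
    ∀ᶠ c in 𝓝 (0 : ℝ), Monotone (f - c • g) := by
  have hpair : ∀ p : {p : α × α // p.1 < p.2},
      ∀ᶠ c in 𝓝 (0 : ℝ), c * (g p.1.2 - g p.1.1) < f p.1.2 - f p.1.1 := fun p =>
    (continuous_id.mul continuous_const).continuousAt.eventually_lt continuousAt_const
      (by simpa using hf p.2)
  filter_upwards [eventually_all.2 hpair] with c hc σ τ hστ
  rcases hστ.eq_or_lt with rfl | hlt
  · exact le_rfl
  · have := hc ⟨(σ, τ), hlt⟩
    simp only [Pi.sub_apply, Pi.smul_apply, smul_eq_mul]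
    linarith [mul_sub c (g τ) (g σ)]

theorem StrictMono.exists_pos_monotone_sub_smul (hf : StrictMono f) (g : α → ℝ) :
    ∃ c : ℝ, 0 < c ∧ Monotone (f - c • g) := by
  obtain ⟨c, hc, hpos⟩ := ((hf.eventually_monotone_sub_smul g).filter_mono
    (nhdsWithin_le_nhds (s := Set.Ioi 0))).and self_mem_nhdsWithin |>.exists
  exact ⟨c, hpos, hc⟩

end

theorem stmt_15_general (n : ℕ) (π : Spins n → ℝ)
    (hπ0 : ∀ σ, 0 ≤ π σ)
    (hFKG : ∀ f g : Spins n → ℝ, Monotone f → Monotone g →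
      (∑ σ, π σ * f σ) * (∑ σ, π σ * g σ) ≤ ∑ σ, π σ * (f σ * g σ))
    (f g : Spins n → ℝ)
    (hf : StrictMono f)
    (hg : Monotone g) (hgm : ∑ σ, π σ * g σ = 0)
    (hfg : ∑ σ, π σ * (f σ * g σ) = 0) :
    ∑ σ, π σ * (g σ) ^ 2 = 0 := by
  obtain ⟨c, hc, hmono⟩ := hf.exists_pos_monotone_sub_smul g
  have hFKG' := hFKG _ g hmono hg
  have hexpand : ∑ σ, π σ * ((f - c • g) σ * g σ)
      = ∑ σ, π σ * (f σ * g σ) - c * ∑ σ, π σ * g σ ^ 2 := by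
    rw [Finset.mul_sum, ← Finset.sum_sub_distrib]
    refine Finset.sum_congr rfl fun σ _ => ?_
    simp only [Pi.sub_apply, Pi.smul_apply, smul_eq_mul]
    ring
  rw [hgm, mul_zero, hexpand, hfg, zero_sub, neg_nonneg] at hFKG'
  have hnonneg : 0 ≤ ∑ σ, π σ * g σ ^ 2 :=
    Finset.sum_nonneg fun σ _ => mul_nonneg (hπ0 σ) (sq_nonneg _)
  exact le_antisymm (nonpos_of_mul_nonpos_right hFKG' hc) hnonneg

theorem stmt_15 (n : ℕ) (π : Spins n → ℝ)
    (hπ0 : ∀ σ, 0 ≤ π σ) (hπ1 : ∑ σ : Spins n, π σ = 1)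
    (hFKG : ∀ f g : Spins n → ℝ, Monotone f → Monotone g →
      (∑ σ, π σ * f σ) * (∑ σ, π σ * g σ) ≤ ∑ σ, π σ * (f σ * g σ))
    (f g : Spins n → ℝ)
    (hf : StrictMono f) (hfm : ∑ σ, π σ * f σ = 0)
    (hg : Monotone g) (hgm : ∑ σ, π σ * g σ = 0)
    (hfg : ∑ σ, π σ * (f σ * g σ) = 0) :
    ∑ σ, π σ * (g σ) ^ 2 = 0 :=
  stmt_15_general n π hπ0 hFKG f g hf hg hgm hfg
end

section
/- Let A be a finite-dimensional self-adjoint (with respect to a positive weight π) linear operator on functions on a finite set, with eigenvalues μ₁ = 1 > μ₂ ≥ ... and with the property that A maps increasing functions to increasing functions and A·1 = 1. If A has a strictly increasing eigenfunction f with eigenvalue μ, and A also has an increasing eigenfunction g with eigenvalue μ₂ (g nonconstant), and π satisfies FKG, then μ = μ₂. -/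
/-!
If `μ ≠ μ₂`, self-adjointness makes `g` orthogonal both to the constants and to `f`.
Since `f` is strictly increasing on a finite poset, `f - ε g` is still increasing for some
`ε > 0`, and FKG applied to `f - ε g` and `g` gives `0 ≤ ⟪f - ε g, g⟫_π = -ε ⟪g, g⟫_π`,
forcing `g = 0`.
-/

open Filter Topology

section

variable {α : Type*} [Fintype α]

lemma sum_mul_mul_eq_zero_of_eigen {π : α → ℝ} {A : (α → ℝ) → α → ℝ}
    (hSA : ∀ u v, ∑ σ, π σ * (u σ * A v σ) = ∑ σ, π σ * (A u σ * v σ))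
    {u v : α → ℝ} {a b : ℝ} (hu : A u = a • u) (hv : A v = b • v) (hab : a ≠ b) :
    ∑ σ, π σ * (u σ * v σ) = 0 := by
  have h := hSA u v
  simp only [hu, hv, Pi.smul_apply, smul_eq_mul] at h
  have hdiff : (b - a) * ∑ σ, π σ * (u σ * v σ) = 0 := by
    rw [Finset.mul_sum, ← sub_eq_zero.mpr h, ← Finset.sum_sub_distrib]
    exact Finset.sum_congr rfl fun σ _ => by ring
  exact (mul_eq_zero.mp hdiff).resolve_left (sub_ne_zero.mpr hab.symm)

lemma sum_mul_eq_zero_of_eigen {π : α → ℝ} {A : (α → ℝ) → α → ℝ}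
    (hSA : ∀ u v, ∑ σ, π σ * (u σ * A v σ) = ∑ σ, π σ * (A u σ * v σ))
    (hA1 : A (fun _ => 1) = fun _ => 1) {v : α → ℝ} {b : ℝ} (hv : A v = b • v)
    (hb : b ≠ 1) :
    ∑ σ, π σ * v σ = 0 := by
  have h1 : A (fun _ => 1) = (1 : ℝ) • fun _ => 1 := by rw [hA1, one_smul]
  simpa using sum_mul_mul_eq_zero_of_eigen hSA h1 hv hb.symm

lemma eq_zero_of_sum_mul_mul_self_nonpos {π : α → ℝ} (hπ : ∀ σ, 0 < π σ) {g : α → ℝ}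
    (hg : ∑ σ, π σ * (g σ * g σ) ≤ 0) : g = 0 := by
  have hnonneg : ∀ σ ∈ Finset.univ, 0 ≤ π σ * (g σ * g σ) :=
    fun σ _ => mul_nonneg (hπ σ).le (mul_self_nonneg _)
  have hzero := (Finset.sum_eq_zero_iff_of_nonneg hnonneg).mp
    (le_antisymm hg (Finset.sum_nonneg hnonneg))
  funext σ
  simpa [(hπ σ).ne'] using hzero σ (Finset.mem_univ σ)

variable [PartialOrder α]

lemma StrictMono.exists_pos_monotone_sub_mul {f : α → ℝ} (hf : StrictMono f) (g : α → ℝ) :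
    ∃ ε > 0, Monotone fun σ => f σ - ε * g σ := by
  have hpair : ∀ p : α × α, ∀ᶠ ε in 𝓝[>] (0 : ℝ),
      p.1 < p.2 → ε * (g p.2 - g p.1) < f p.2 - f p.1 := by
    intro p
    by_cases hp : p.1 < p.2
    · have hlim : Tendsto (fun ε : ℝ => ε * (g p.2 - g p.1)) (𝓝[>] 0) (𝓝 0) := by
        simpa using ((tendsto_id (x := 𝓝 (0 : ℝ))).mono_left nhdsWithin_le_nhds).mul_const
          (g p.2 - g p.1)
      filter_upwards [hlim.eventually (gt_mem_nhds (sub_pos.mpr (hf hp)))] with ε hε _ using hε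
    · exact Eventually.of_forall fun _ h => absurd h hp
  obtain ⟨ε, hε, hεpos⟩ := (eventually_all.mpr hpair).and self_mem_nhdsWithin |>.exists
  refine ⟨ε, hεpos, fun σ τ hle => ?_⟩
  rcases hle.eq_or_lt with rfl | hlt
  · exact le_rfl
  · have := hε (σ, τ) hlt
    dsimp only at this ⊢
    linarith

lemma eq_zero_of_fkg {π : α → ℝ} (hπ : ∀ σ, 0 < π σ)
    (hFKG : ∀ f g : α → ℝ, Monotone f → Monotone g →
      (∑ σ, π σ * f σ) * (∑ σ, π σ * g σ) ≤ ∑ σ, π σ * (f σ * g σ))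
    {f g : α → ℝ} (hf : StrictMono f) (hg : Monotone g)
    (hg1 : ∑ σ, π σ * g σ = 0) (hfg : ∑ σ, π σ * (f σ * g σ) = 0) : g = 0 := by
  obtain ⟨ε, hεpos, hmono⟩ := hf.exists_pos_monotone_sub_mul g
  have hsplit : ∑ σ, π σ * ((f σ - ε * g σ) * g σ)
      = ∑ σ, π σ * (f σ * g σ) - ε * ∑ σ, π σ * (g σ * g σ) := by
    rw [Finset.mul_sum, ← Finset.sum_sub_distrib]
    exact Finset.sum_congr rfl fun σ _ => by ring
  have h := hFKG _ g hmono hg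
  rw [hg1, mul_zero, hsplit, hfg, zero_sub, neg_nonneg] at h
  exact eq_zero_of_sum_mul_mul_self_nonpos hπ <| nonpos_of_mul_nonpos_right h hεpos

end

theorem stmt_16_general (n : ℕ) (π : Spins n → ℝ)
    -- π is a fully supported probability measure
    (hπ0 : ∀ σ, 0 < π σ)
    -- π satisfies the FKG inequality
    (hFKG : ∀ f g : Spins n → ℝ, Monotone f → Monotone g →
      (∑ σ, π σ * f σ) * (∑ σ, π σ * g σ) ≤ ∑ σ, π σ * (f σ * g σ))
    -- A is a linear operator on functions on the (finite) state space
    (A : (Spins n → ℝ) →ₗ[ℝ] (Spins n → ℝ))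
    -- A is self-adjoint with respect to the weight π
    (hSA : ∀ u v : Spins n → ℝ,
      ∑ σ, π σ * (u σ * A v σ) = ∑ σ, π σ * (A u σ * v σ))
    -- A·1 = 1
    (hA1 : A (fun _ => 1) = fun _ => 1)
    -- all eigenvalues other than μ₁ = 1 are at most μ₂ < 1
    (μ μ₂ : ℝ) (hμ₂lt : μ₂ < 1)
    -- f is a strictly increasing eigenfunction of A with eigenvalue μ
    (f : Spins n → ℝ) (hf : StrictMono f) (hAf : A f = μ • f)
    -- g is a nonconstant increasing eigenfunction of A with eigenvalue μ₂
    (g : Spins n → ℝ) (hg : Monotone g) (hgnc : ¬∃ c : ℝ, g = fun _ => c)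
    (hAg : A g = μ₂ • g) :
    μ = μ₂ := by
  by_contra hne
  have hg1 := sum_mul_eq_zero_of_eigen hSA hA1 hAg hμ₂lt.ne
  have hfg := sum_mul_mul_eq_zero_of_eigen hSA hAf hAg hne
  exact hgnc ⟨0, eq_zero_of_fkg hπ0 hFKG hf hg hg1 hfg⟩

theorem stmt_16 (n : ℕ) (π : Spins n → ℝ)
    -- π is a fully supported probability measure
    (hπ0 : ∀ σ, 0 < π σ) (hπ1 : ∑ σ : Spins n, π σ = 1)
    -- π satisfies the FKG inequality
    (hFKG : ∀ f g : Spins n → ℝ, Monotone f → Monotone g →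
      (∑ σ, π σ * f σ) * (∑ σ, π σ * g σ) ≤ ∑ σ, π σ * (f σ * g σ))
    -- A is a linear operator on functions on the (finite) state space
    (A : (Spins n → ℝ) →ₗ[ℝ] (Spins n → ℝ))
    -- A is self-adjoint with respect to the weight π
    (hSA : ∀ u v : Spins n → ℝ,
      ∑ σ, π σ * (u σ * A v σ) = ∑ σ, π σ * (A u σ * v σ))
    -- A maps increasing functions to increasing functions
    (hmono : ∀ u : Spins n → ℝ, Monotone u → Monotone (A u))
    -- A·1 = 1
    (hA1 : A (fun _ => 1) = fun _ => 1)
    -- the eigenvalue μ₁ = 1 is simple: its eigenfunctions are the constants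
    (hsimple : ∀ u : Spins n → ℝ, A u = u → ∃ c : ℝ, u = fun _ => c)
    -- all eigenvalues other than μ₁ = 1 are at most μ₂ < 1
    (μ μ₂ : ℝ) (hμ₂lt : μ₂ < 1)
    (hsecond : ∀ (ν : ℝ) (u : Spins n → ℝ), u ≠ 0 → A u = ν • u → ν ≠ 1 → ν ≤ μ₂)
    -- f is a strictly increasing eigenfunction of A with eigenvalue μ
    (f : Spins n → ℝ) (hf : StrictMono f) (hAf : A f = μ • f)
    -- g is a nonconstant increasing eigenfunction of A with eigenvalue μ₂
    (g : Spins n → ℝ) (hg : Monotone g) (hgnc : ¬∃ c : ℝ, g = fun _ => c)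
    (hAg : A g = μ₂ • g) :
    μ = μ₂ :=
  stmt_16_general n π hπ0 hFKG A hSA hA1 μ μ₂ hμ₂lt f hf hAf g hg hgnc hAg
end

section
/- Let x, y be vectors of positive reals with (1-ε)ⁿ ≤ x_i ≤ (1+ε)ⁿ for all i, for some 0 < ε < 1, and let c_i > s_i > 0 (indices mod n). Then Σ c_i(x_i² + x_{i+1}²) / [Σ c_i(x_i - x_{i+1})² + Σ 2x_i x_{i+1}(c_i - s_i)] ≤ ((1+ε)/(1-ε))^{2n} · Σ c_i / Σ (c_i - s_i). -/
/-! If every `x i` lies in `[m, M]` with `m > 0`, the numerator is at most `2 M² ∑ c` and the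
denominator is at least its cross term, hence at least `2 m² ∑ (c - s)`; for the theorem take
`m = (1 - ε)ⁿ` and `M = (1 + ε)ⁿ`. -/

open Finset

section QuotientBound

variable {ι : Type*} [Fintype ι] (σ : ι → ι)

theorem sum_mul_sq_add_sq_le {c x : ι → ℝ} {M : ℝ} (hc : ∀ i, 0 ≤ c i)
    (hx : ∀ i, 0 ≤ x i ∧ x i ≤ M) :
    ∑ i, c i * (x i ^ 2 + x (σ i) ^ 2) ≤ 2 * M ^ 2 * ∑ i, c i := by
  have hsq : ∀ i, x i ^ 2 ≤ M ^ 2 := fun i => pow_le_pow_left₀ (hx i).1 (hx i).2 2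
  rw [mul_sum]
  refine sum_le_sum fun i _ => ?_
  nlinarith [hc i, hsq i, hsq (σ i)]

theorem two_mul_sq_mul_sum_le {w x : ι → ℝ} {m : ℝ} (hw : ∀ i, 0 ≤ w i) (hm : 0 ≤ m)
    (hx : ∀ i, m ≤ x i) :
    2 * m ^ 2 * ∑ i, w i ≤ ∑ i, 2 * x i * x (σ i) * w i := by
  rw [mul_sum]
  refine sum_le_sum fun i _ => ?_
  have : m ^ 2 ≤ x i * x (σ i) := by
    rw [sq]; exact mul_le_mul (hx i) (hx (σ i)) hm (hm.trans (hx i))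
  nlinarith [hw i]

theorem quotient_le_of_bounds [Nonempty ι] {c s x : ι → ℝ} {m M : ℝ} (hc : ∀ i, 0 ≤ c i)
    (hsc : ∀ i, s i < c i) (hm : 0 < m) (hx : ∀ i, m ≤ x i ∧ x i ≤ M) :
    (∑ i, c i * (x i ^ 2 + x (σ i) ^ 2)) /
        ((∑ i, c i * (x i - x (σ i)) ^ 2) + ∑ i, 2 * x i * x (σ i) * (c i - s i)) ≤
      (M / m) ^ 2 * ((∑ i, c i) / ∑ i, (c i - s i)) := by
  have hgap : 0 < ∑ i, (c i - s i) := sum_pos (fun i _ => sub_pos.2 (hsc i)) univ_nonempty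
  have hnum := sum_mul_sq_add_sq_le σ hc fun i => ⟨hm.le.trans (hx i).1, (hx i).2⟩
  have hcross := two_mul_sq_mul_sum_le σ (fun i => (sub_pos.2 (hsc i)).le) hm.le
    fun i => (hx i).1
  have hsquares : 0 ≤ ∑ i, c i * (x i - x (σ i)) ^ 2 :=
    sum_nonneg fun i _ => mul_nonneg (hc i) (sq_nonneg _)
  calc _ ≤ (2 * M ^ 2 * ∑ i, c i) / (2 * m ^ 2 * ∑ i, (c i - s i)) :=
        div_le_div₀ (mul_nonneg (by positivity) (sum_nonneg fun i _ => hc i)) hnum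
          (by positivity) (by linarith)
    _ = (M / m) ^ 2 * ((∑ i, c i) / ∑ i, (c i - s i)) := by
        field_simp

end QuotientBound

theorem stmt_18_general (n : ℕ) [NeZero n] (c s : Fin n → ℝ)
    (hs : ∀ i, 0 < s i) (hc : ∀ i, s i < c i)
    (x : Fin n → ℝ)
    (ε : ℝ) (hε1 : ε < 1)
    (hxb : ∀ i, (1 - ε) ^ n ≤ x i ∧ x i ≤ (1 + ε) ^ n) :
    (∑ i : Fin n, c i * (x i ^ 2 + x (i + 1) ^ 2)) /
      ((∑ i : Fin n, c i * (x i - x (i + 1)) ^ 2) +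
       (∑ i : Fin n, 2 * x i * x (i + 1) * (c i - s i))) ≤
    ((1 + ε) / (1 - ε)) ^ (2 * n) *
      ((∑ i : Fin n, c i) / (∑ i : Fin n, (c i - s i))) := by
  have hm : 0 < (1 - ε) ^ n := pow_pos (sub_pos.2 hε1) n
  rw [pow_mul', div_pow]
  exact quotient_le_of_bounds (· + 1) (fun i => ((hs i).trans (hc i)).le) hc hm hxb

theorem stmt_18 (n : ℕ) [NeZero n] (hn : 3 ≤ n) (c s : Fin n → ℝ)
    (hs : ∀ i, 0 < s i) (hc : ∀ i, s i < c i)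
    (x : Fin n → ℝ) (hx : ∀ i, 0 < x i)
    (ε : ℝ) (hε0 : 0 < ε) (hε1 : ε < 1)
    (hxb : ∀ i, (1 - ε) ^ n ≤ x i ∧ x i ≤ (1 + ε) ^ n) :
    (∑ i : Fin n, c i * (x i ^ 2 + x (i + 1) ^ 2)) /
      ((∑ i : Fin n, c i * (x i - x (i + 1)) ^ 2) +
       (∑ i : Fin n, 2 * x i * x (i + 1) * (c i - s i))) ≤
    ((1 + ε) / (1 - ε)) ^ (2 * n) *
      ((∑ i : Fin n, c i) / (∑ i : Fin n, (c i - s i))) :=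
  stmt_18_general n c s hs hc x ε hε1 hxb
end
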